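/- Let A ∈ 𝔰𝔭(ℝ⁶) with A ≠ 0, and set d := ( |[A,Aᵗ]|² + ⟨S_A ∘₆ S_A, [A,Aᵗ]⟩ ) / (2|A|²). The following are equivalent: (1) there exist c ∈ ℝ and a derivation D of 𝔤_A such that Q_A = c·I₇ + ½(D + Dᵗ) (i.e. the associated coclosed G₂-structure is a semi-algebraic soliton of the Laplacian coflow); (2) there exists D₁ ∈ gl(ℝ⁶) with [D₁, A] = d·A and [A,Aᵗ] + S_A ∘₆ S_A = −( tr(S_A²) + ½(tr JA)² + 2d )·I₆ + D₁ + D₁ᵗ. In this case c = −½( tr(S_A²) + ½(tr JA)² + 2d ). -/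

import Mathlib

open Matrix BigOperators

noncomputable section

abbrev M6 : Type := Matrix (Fin 6) (Fin 6) ℝ
abbrev M7 : Type := Matrix (Fin 7) (Fin 7) ℝ

/-- The canonical almost complex structure `J` on `ℝ⁶`:
`Je₁ = e₂, Je₂ = −e₁, Je₃ = e₄, Je₄ = −e₃, Je₅ = e₆, Je₆ = −e₅` (0-based indices). -/
def J6 : M6 := Matrix.of fun i j =>
  if (i = 1 ∧ j = 0) ∨ (i = 3 ∧ j = 2) ∨ (i = 5 ∧ j = 4) then 1
  else if (i = 0 ∧ j = 1) ∨ (i = 2 ∧ j = 3) ∨ (i = 4 ∧ j = 5) then -1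
  else 0

/-- `A ∈ 𝔰𝔭(ℝ⁶)` iff `AJ + JAᵗ = 0`. -/
def inSp (A : M6) : Prop := A * J6 + J6 * Aᵀ = 0

/-- The symmetric part `S_A = ½(A + Aᵗ)`. -/
def symPart (A : M6) : M6 := (1/2 : ℝ) • (A + Aᵀ)

/-- Frobenius inner product `⟨X,Y⟩ = tr(XYᵗ)`. -/
def mdot {n : ℕ} (X Y : Matrix (Fin n) (Fin n) ℝ) : ℝ := (X * Yᵀ).trace

/-- Commutator `[X,Y] = XY − YX`. -/
def mcomm {n : ℕ} (X Y : Matrix (Fin n) (Fin n) ℝ) : Matrix (Fin n) (Fin n) ℝ := X * Y - Y * X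

/-- Kronecker delta. -/
def kdelta {n : ℕ} (x y : Fin n) : ℝ := if x = y then 1 else 0

/-- The totally antisymmetric 3-tensor `e^a ∧ e^b ∧ e^c` evaluated on `(e_i, e_j, e_k)`. -/
def alt3 {n : ℕ} (a b c i j k : Fin n) : ℝ :=
  Matrix.det !![kdelta a i, kdelta a j, kdelta a k;
                kdelta b i, kdelta b j, kdelta b k;
                kdelta c i, kdelta c j, kdelta c k]

/-- `ρ⁺ = e¹³⁵ − e¹⁴⁶ − e²⁴⁵ − e²³⁶` (here written with 0-based indices). -/
def rhoP (i j k : Fin 6) : ℝ :=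
  alt3 0 2 4 i j k - alt3 0 3 5 i j k - alt3 1 3 4 i j k - alt3 1 2 5 i j k

/-- `(h ∘₆ k)_{ab} = Σ_{m,n,p,q} h_{mn} k_{pq} ρ⁺_{mpa} ρ⁺_{nqb}`. -/
def circ6 (h k : M6) : M6 :=
  Matrix.of fun a b => ∑ m, ∑ n, ∑ p, ∑ q, h m n * k p q * rhoP m p a * rhoP n q b

/-- Embed a 6×6 block and a scalar as a block-diagonal 7×7 matrix `diag(M, x)`. -/
def blockDiag7 (M : M6) (x : ℝ) : M7 :=
  Matrix.of fun i j =>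
    if hi : (i : ℕ) < 6 then
      (if hj : (j : ℕ) < 6 then M ⟨i, hi⟩ ⟨j, hj⟩ else 0)
    else (if (j : ℕ) < 6 then 0 else x)

/-- The Lie bracket of the almost Abelian Lie algebra `𝔤_A = ℝ⁶ ⊕ ℝe₇`:
`[e₇, v] = Av` for `v ∈ ℝ⁶` and `[v, w] = 0` for `v, w ∈ ℝ⁶`. -/
def bracket7 (A : M6) (x y : Fin 7 → ℝ) : Fin 7 → ℝ :=
  x 6 • (blockDiag7 A 0).mulVec y - y 6 • (blockDiag7 A 0).mulVec x

/-- `D ∈ gl(ℝ⁷)` is a derivation of `𝔤_A`. -/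
def IsDerivation7 (A : M6) (D : M7) : Prop :=
  ∀ x y : Fin 7 → ℝ,
    D.mulVec (bracket7 A x y) = bracket7 A (D.mulVec x) y + bracket7 A x (D.mulVec y)

/-- `Q_A = diag(½[A,Aᵗ] + ½ S_A ∘₆ S_A , −½tr(S_A²) − ¼(tr JA)²)`, the matrix with
`Δ_A ψ = θ(Q_A)ψ`. -/
def QA (A : M6) : M7 :=
  blockDiag7 ((1/2 : ℝ) • mcomm A Aᵀ + (1/2 : ℝ) • circ6 (symPart A) (symPart A))
    (-(1/2) * (symPart A * symPart A).trace - (1/4) * ((J6 * A).trace)^2)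

/-!
A derivation `D` of `𝔤_A` restricts on `ℝ⁶` to a matrix `E` with `[E, A] = μA`, where `μ` is the
`e₇e₇`-entry of `D`; conversely `diag(D₁, μ)` is a derivation whenever `[D₁, A] = μA`.
Pairing the `ℝ⁶`-block `[A,Aᵗ] + S_A ∘₆ S_A = 2c·I₆ + E + Eᵗ` of the soliton equation with the
symmetric traceless matrix `[A,Aᵗ]` kills the identity term and turns `⟨E + Eᵗ, [A,Aᵗ]⟩` into
`2μ|A|²`, which forces `μ = d`; the `e₇e₇`-entry of the soliton equation then determines `c`.
-/

lemma Matrix.ext_castSucc_last {α : Type*} {n : ℕ} {X Y : Matrix (Fin (n + 1)) (Fin (n + 1)) α}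
    (hcc : ∀ i j : Fin n, X i.castSucc j.castSucc = Y i.castSucc j.castSucc)
    (hcl : ∀ i : Fin n, X i.castSucc (Fin.last n) = Y i.castSucc (Fin.last n))
    (hlc : ∀ j : Fin n, X (Fin.last n) j.castSucc = Y (Fin.last n) j.castSucc)
    (hll : X (Fin.last n) (Fin.last n) = Y (Fin.last n) (Fin.last n)) : X = Y := by
  ext i j
  induction i using Fin.lastCases <;> induction j using Fin.lastCases <;> simp only [*]

@[simp]
lemma blockDiag7_castSucc_castSucc (M : M6) (x : ℝ) (i j : Fin 6) :
    blockDiag7 M x i.castSucc j.castSucc = M i j := by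
  simp [blockDiag7]

@[simp]
lemma blockDiag7_castSucc_last (M : M6) (x : ℝ) (i : Fin 6) :
    blockDiag7 M x i.castSucc (Fin.last 6) = 0 := by
  simp [blockDiag7]

@[simp]
lemma blockDiag7_last_castSucc (M : M6) (x : ℝ) (j : Fin 6) :
    blockDiag7 M x (Fin.last 6) j.castSucc = 0 := by
  simp [blockDiag7]

@[simp]
lemma blockDiag7_last_last (M : M6) (x : ℝ) : blockDiag7 M x (Fin.last 6) (Fin.last 6) = x := by
  simp [blockDiag7]

lemma blockDiag7_mul (M N : M6) (x y : ℝ) :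
    blockDiag7 M x * blockDiag7 N y = blockDiag7 (M * N) (x * y) := by
  apply Matrix.ext_castSucc_last <;> simp [Matrix.mul_apply, Fin.sum_univ_castSucc, -Fin.reduceLast]

lemma blockDiag7_add (M N : M6) (x y : ℝ) :
    blockDiag7 M x + blockDiag7 N y = blockDiag7 (M + N) (x + y) := by
  apply Matrix.ext_castSucc_last <;> simp [-Fin.reduceLast]

lemma smul_blockDiag7 (c : ℝ) (M : M6) (x : ℝ) :
    c • blockDiag7 M x = blockDiag7 (c • M) (c * x) := by
  apply Matrix.ext_castSucc_last <;> simp [-Fin.reduceLast]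

lemma blockDiag7_transpose (M : M6) (x : ℝ) : (blockDiag7 M x)ᵀ = blockDiag7 Mᵀ x := by
  apply Matrix.ext_castSucc_last <;> simp [-Fin.reduceLast]

lemma blockDiag7_one_one : blockDiag7 1 1 = 1 := by
  apply Matrix.ext_castSucc_last <;>
    simp [Matrix.one_apply, (Fin.castSucc_ne_last _).symm, -Fin.reduceLast]

lemma blockDiag7_mulVec_last (M : M6) (x : ℝ) (v : Fin 7 → ℝ) :
    (blockDiag7 M x *ᵥ v) (Fin.last 6) = x * v (Fin.last 6) := by
  simp [mulVec, dotProduct, Fin.sum_univ_castSucc, -Fin.reduceLast]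

lemma isDerivation7_blockDiag7 {A D₁ : M6} {d : ℝ} (h : mcomm D₁ A = d • A) :
    IsDerivation7 A (blockDiag7 D₁ d) := by
  have hmul : blockDiag7 D₁ d * blockDiag7 A 0 =
      d • blockDiag7 A 0 + blockDiag7 A 0 * blockDiag7 D₁ d := by
    rw [blockDiag7_mul, blockDiag7_mul, smul_blockDiag7, blockDiag7_add, ← h, mcomm]
    simp
  intro x y
  ext k
  simp only [bracket7, mulVec_sub, mulVec_smul, mulVec_mulVec, hmul, add_mulVec, smul_mulVec,
    show (6 : Fin 7) = Fin.last 6 from rfl, blockDiag7_mulVec_last, Pi.add_apply, Pi.sub_apply,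
    Pi.smul_apply, smul_eq_mul]
  ring

lemma IsDerivation7.mcomm_submatrix_castSucc {A : M6} {D : M7} (hD : IsDerivation7 A D) :
    mcomm (D.submatrix Fin.castSucc Fin.castSucc) A = D (Fin.last 6) (Fin.last 6) • A := by
  ext i j
  have h := congrFun (hD (Pi.single (Fin.last 6) 1) (Pi.single j.castSucc 1)) i.castSucc
  simp only [bracket7, show (6 : Fin 7) = Fin.last 6 from rfl] at h
  simp [mcomm, Matrix.mul_apply, mulVec, dotProduct, Pi.single_apply,
    Fin.sum_univ_castSucc (n := 6), Fin.castSucc_ne_last, -Fin.reduceLast] at h ⊢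
  linarith

section FrobeniusPairing

variable {n : ℕ}

lemma mdot_self_pos {A : Matrix (Fin n) (Fin n) ℝ} (hA : A ≠ 0) : 0 < mdot A A := by
  rw [mdot, ← conjTranspose_eq_transpose_of_trivial]
  refine (posSemidef_self_mul_conjTranspose A).trace_nonneg.lt_of_ne (Ne.symm ?_)
  rwa [Ne, trace_mul_conjTranspose_self_eq_zero_iff]

lemma mdot_transpose_left (X Y : Matrix (Fin n) (Fin n) ℝ) : mdot Xᵀ Y = mdot X Yᵀ := by
  rw [mdot, mdot, ← trace_transpose, transpose_mul, transpose_transpose, transpose_transpose,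
    trace_mul_comm]

lemma mdot_one_mcomm (X Y : Matrix (Fin n) (Fin n) ℝ) : mdot 1 (mcomm X Y) = 0 := by
  simp [mdot, mcomm, trace_mul_comm X Y]

lemma mcomm_self_transpose_transpose (A : Matrix (Fin n) (Fin n) ℝ) :
    (mcomm A Aᵀ)ᵀ = mcomm A Aᵀ := by
  simp [mcomm]

lemma mdot_mcomm_self_transpose {A E : Matrix (Fin n) (Fin n) ℝ} {μ : ℝ}
    (h : mcomm E A = μ • A) : mdot E (mcomm A Aᵀ) = μ * mdot A A := by
  rw [mdot, mcomm_self_transpose_transpose]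
  calc (E * mcomm A Aᵀ).trace = (mcomm E A * Aᵀ).trace := by
        simp only [mcomm, Matrix.mul_sub, Matrix.sub_mul, trace_sub, ← Matrix.mul_assoc,
          trace_mul_cycle E Aᵀ A]
    _ = μ * mdot A A := by rw [h, smul_mul, trace_smul, smul_eq_mul, mdot]

lemma mdot_mcomm_add_eq_of_soliton {A E P : Matrix (Fin n) (Fin n) ℝ} {c μ : ℝ}
    (hcomm : mcomm E A = μ • A) (hsol : mcomm A Aᵀ + P = c • 1 + E + Eᵀ) :
    mdot (mcomm A Aᵀ) (mcomm A Aᵀ) + mdot P (mcomm A Aᵀ) = 2 * μ * mdot A A := by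
  set C := mcomm A Aᵀ
  calc mdot C C + mdot P C = mdot (C + P) C := by simp only [mdot, Matrix.add_mul, trace_add]
    _ = mdot (c • 1 + E + Eᵀ) C := by rw [hsol]
    _ = c * mdot 1 C + mdot E C + mdot Eᵀ C := by
        simp only [mdot, Matrix.add_mul, trace_add, smul_mul, trace_smul, smul_eq_mul]
    _ = 2 * μ * mdot A A := by
        rw [mdot_one_mcomm, mdot_transpose_left, mcomm_self_transpose_transpose,
          mdot_mcomm_self_transpose hcomm]
        ring

lemma eq_div_of_soliton {A E P : Matrix (Fin n) (Fin n) ℝ} {c μ : ℝ} (hA : A ≠ 0)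
    (hcomm : mcomm E A = μ • A) (hsol : mcomm A Aᵀ + P = c • 1 + E + Eᵀ) :
    μ = (mdot (mcomm A Aᵀ) (mcomm A Aᵀ) + mdot P (mcomm A Aᵀ)) / (2 * mdot A A) := by
  have := mdot_self_pos hA
  rw [mdot_mcomm_add_eq_of_soliton hcomm hsol]
  field_simp

end FrobeniusPairing

lemma soliton_blocks_of_QA_eq {A : M6} {D : M7} {c : ℝ}
    (h : QA A = c • (1 : M7) + (1/2 : ℝ) • (D + Dᵀ)) :
    mcomm A Aᵀ + circ6 (symPart A) (symPart A) = (2 * c) • (1 : M6)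
        + D.submatrix Fin.castSucc Fin.castSucc + (D.submatrix Fin.castSucc Fin.castSucc)ᵀ ∧
      -(1/2) * (symPart A * symPart A).trace - (1/4) * ((J6 * A).trace)^2
        = c + D (Fin.last 6) (Fin.last 6) := by
  constructor
  · ext i j
    have hij := congrFun₂ h i.castSucc j.castSucc
    simp only [QA, blockDiag7_castSucc_castSucc, Matrix.add_apply, Matrix.smul_apply, one_apply,
      transpose_apply, Fin.castSucc_inj, smul_eq_mul] at hij
    simp only [Matrix.add_apply, Matrix.smul_apply, one_apply, transpose_apply, submatrix_apply,
      smul_eq_mul]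
    linarith
  · have hlast := congrFun₂ h (Fin.last 6) (Fin.last 6)
    simp only [QA, blockDiag7_last_last, Matrix.add_apply, Matrix.smul_apply, one_apply_eq,
      transpose_apply, smul_eq_mul] at hlast
    linarith

lemma QA_eq_of_soliton_blocks {A D₁ : M6} {c d : ℝ}
    (hblock : mcomm A Aᵀ + circ6 (symPart A) (symPart A) = (2 * c) • (1 : M6) + D₁ + D₁ᵀ)
    (hlast : -(1/2) * (symPart A * symPart A).trace - (1/4) * ((J6 * A).trace)^2 = c + d) :
    QA A = c • (1 : M7) + (1/2 : ℝ) • (blockDiag7 D₁ d + (blockDiag7 D₁ d)ᵀ) := by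
  rw [← blockDiag7_one_one, blockDiag7_transpose, blockDiag7_add, smul_blockDiag7,
    smul_blockDiag7, blockDiag7_add, QA, hlast]
  congr 1
  · rw [← smul_add, hblock]
    module
  · ring

lemma exists_derivation_QA_eq_of_soliton_blocks {A D₁ : M6} {d : ℝ} (hcomm : mcomm D₁ A = d • A)
    (hblock : mcomm A Aᵀ + circ6 (symPart A) (symPart A) =
      (-((symPart A * symPart A).trace + (1/2) * ((J6 * A).trace)^2 + 2*d)) • (1 : M6) + D₁ + D₁ᵀ) :
    ∃ D : M7, IsDerivation7 A D ∧
      QA A = (-(1/2) * ((symPart A * symPart A).trace + (1/2) * ((J6 * A).trace)^2 + 2*d))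
        • (1 : M7) + (1/2 : ℝ) • (D + Dᵀ) :=
  ⟨blockDiag7 D₁ d, isDerivation7_blockDiag7 hcomm,
    QA_eq_of_soliton_blocks (by rw [hblock]; ring_nf) (by ring)⟩

theorem semi_algebraic_soliton_iff_general (A : M6) (hA0 : A ≠ 0)
    (d : ℝ)
    (hd : d = (mdot (mcomm A Aᵀ) (mcomm A Aᵀ)
        + mdot (circ6 (symPart A) (symPart A)) (mcomm A Aᵀ)) / (2 * mdot A A)) :
    ((∃ (c : ℝ) (D : M7), IsDerivation7 A D ∧
        QA A = c • (1 : M7) + (1/2 : ℝ) • (D + Dᵀ)) ↔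
      (∃ D₁ : M6, mcomm D₁ A = d • A ∧
        mcomm A Aᵀ + circ6 (symPart A) (symPart A) =
          (-((symPart A * symPart A).trace + (1/2) * ((J6 * A).trace)^2 + 2*d)) • (1 : M6)
            + D₁ + D₁ᵀ)) ∧
    ((∃ D₁ : M6, mcomm D₁ A = d • A ∧
        mcomm A Aᵀ + circ6 (symPart A) (symPart A) =
          (-((symPart A * symPart A).trace + (1/2) * ((J6 * A).trace)^2 + 2*d)) • (1 : M6)
            + D₁ + D₁ᵀ) →
      ∃ D : M7, IsDerivation7 A D ∧
        QA A = (-(1/2) * ((symPart A * symPart A).trace + (1/2) * ((J6 * A).trace)^2 + 2*d))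
            • (1 : M7) + (1/2 : ℝ) • (D + Dᵀ)) := by
  refine ⟨⟨?_, fun ⟨_, hcomm, hblock⟩ ↦
    ⟨_, exists_derivation_QA_eq_of_soliton_blocks hcomm hblock⟩⟩,
    fun ⟨_, hcomm, hblock⟩ ↦ exists_derivation_QA_eq_of_soliton_blocks hcomm hblock⟩
  rintro ⟨c, D, hD, hQ⟩
  obtain ⟨hblock, hlast⟩ := soliton_blocks_of_QA_eq hQ
  have hcomm := hD.mcomm_submatrix_castSucc
  have hμ : D (Fin.last 6) (Fin.last 6) = d := hd ▸ eq_div_of_soliton hA0 hcomm hblock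
  refine ⟨_, hμ ▸ hcomm, ?_⟩
  rw [hblock]
  congr 3
  linear_combination -2 * hlast - 2 * hμ

/-- `(𝔤_A, φ)` is a semi-algebraic soliton of the Laplacian coflow
(i.e. `Q_A = c·I₇ + ½(D + Dᵗ)` for some `c ∈ ℝ` and derivation `D` of `𝔤_A`) iff there is
`D₁ ∈ gl(ℝ⁶)` with `[D₁,A] = d·A` and
`[A,Aᵗ] + S_A ∘₆ S_A = −(tr(S_A²) + ½(tr JA)² + 2d)·I₆ + D₁ + D₁ᵗ`, where
`d = (|[A,Aᵗ]|² + ⟨S_A ∘₆ S_A,[A,Aᵗ]⟩)/(2|A|²)`; in this case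
`c = −½(tr(S_A²) + ½(tr JA)² + 2d)`. -/
theorem semi_algebraic_soliton_iff (A : M6) (hA : inSp A) (hA0 : A ≠ 0)
    (d : ℝ)
    (hd : d = (mdot (mcomm A Aᵀ) (mcomm A Aᵀ)
        + mdot (circ6 (symPart A) (symPart A)) (mcomm A Aᵀ)) / (2 * mdot A A)) :
    ((∃ (c : ℝ) (D : M7), IsDerivation7 A D ∧
        QA A = c • (1 : M7) + (1/2 : ℝ) • (D + Dᵀ)) ↔
      (∃ D₁ : M6, mcomm D₁ A = d • A ∧
        mcomm A Aᵀ + circ6 (symPart A) (symPart A) =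
          (-((symPart A * symPart A).trace + (1/2) * ((J6 * A).trace)^2 + 2*d)) • (1 : M6)
            + D₁ + D₁ᵀ)) ∧
    ((∃ D₁ : M6, mcomm D₁ A = d • A ∧
        mcomm A Aᵀ + circ6 (symPart A) (symPart A) =
          (-((symPart A * symPart A).trace + (1/2) * ((J6 * A).trace)^2 + 2*d)) • (1 : M6)
            + D₁ + D₁ᵀ) →
      ∃ D : M7, IsDerivation7 A D ∧
        QA A = (-(1/2) * ((symPart A * symPart A).trace + (1/2) * ((J6 * A).trace)^2 + 2*d))
            • (1 : M7) + (1/2 : ℝ) • (D + Dᵀ)) :=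
  semi_algebraic_soliton_iff_general A hA0 d hd
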